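/- arXiv:1905.07483 — 2 statements merged into one kernel-verified Lean document; each statement's English description precedes it below -/
import Mathlib

section
/- Let V be a finite set with |V| = n ≥ 1, let L ≥ 1 and q ≥ 1 be integers, and let D_1, …, D_q ⊆ V satisfy |D_i| ≥ L for every 1 ≤ i ≤ q. Then there exists a subset R ⊆ V such that R ∩ D_i ≠ ∅ for every 1 ≤ i ≤ q and, as real numbers, |R| ≤ (n/L)·ln q + 1. -/
/-!
Greedy hitting set. By double counting, some point of `V` lies in at least a fraction `L / n` of
the sets still to be hit; taking it leaves at most `(1 - L / n)` of them, which lowers `log` of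
their number by at least `L / n`. Hence after at most `(n / L) · ln q` steps the next greedy point
hits all remaining sets.
-/

open Finset Real

theorem log_add_le_log_of_le_one_sub_mul {a b t : ℝ} (ha : 0 < a) (hb : 0 < b)
    (hab : a ≤ (1 - t) * b) : log a + t ≤ log b := by
  have hratio : a / b ≤ 1 - t := (div_le_iff₀ hb).2 hab
  have := log_le_sub_one_of_pos (div_pos ha hb)
  rw [log_div ha.ne' hb.ne'] at this
  linarith

section HittingSet

variable {ι α : Type*} [Fintype α] [DecidableEq α] (D : ι → Finset α)

theorem exists_mul_card_le_card_mul_card_filter_mem [Nonempty α] {S : Finset ι} {L : ℕ}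
    (hD : ∀ i ∈ S, L ≤ #(D i)) :
    ∃ x, L * #S ≤ Fintype.card α * #{i ∈ S | x ∈ D i} := by
  have hsum : ∑ _x : α, L * #S ≤ ∑ x : α, Fintype.card α * #{i ∈ S | x ∈ D i} := by
    have hcount : ∑ i ∈ S, #(D i) = ∑ x : α, #{i ∈ S | x ∈ D i} := by
      simpa [bipartiteAbove, bipartiteBelow] using
        sum_card_bipartiteAbove_eq_sum_card_bipartiteBelow (s := S) (t := univ)
          (fun i x => x ∈ D i)
    calc ∑ _x : α, L * #S = Fintype.card α * ∑ _i ∈ S, L := by simp [mul_comm]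
      _ ≤ Fintype.card α * ∑ i ∈ S, #(D i) := by gcongr with i hi; exact hD i hi
      _ = ∑ x : α, Fintype.card α * #{i ∈ S | x ∈ D i} := by rw [hcount, mul_sum]
  obtain ⟨x, -, hx⟩ := exists_le_of_sum_le univ_nonempty hsum
  exact ⟨x, hx⟩

theorem exists_card_filter_notMem_le [Nonempty α] {S : Finset ι} {L : ℕ}
    (hD : ∀ i ∈ S, L ≤ #(D i)) :
    ∃ x, (#{i ∈ S | x ∉ D i} : ℝ) ≤ (1 - L / Fintype.card α) * #S := by
  obtain ⟨x, hx⟩ := exists_mul_card_le_card_mul_card_filter_mem D hD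
  refine ⟨x, ?_⟩
  have hsplit := card_filter_add_card_filter_not (s := S) (fun i => x ∈ D i)
  have hn : (0 : ℝ) < Fintype.card α := by exact_mod_cast Fintype.card_pos
  have hx' : (L : ℝ) * #S ≤ Fintype.card α * #{i ∈ S | x ∈ D i} := by exact_mod_cast hx
  have hsplit' : (#{i ∈ S | x ∈ D i} : ℝ) + #{i ∈ S | x ∉ D i} = #S := by exact_mod_cast hsplit
  have hkey : (#{i ∈ S | x ∉ D i} : ℝ) * Fintype.card α ≤ (Fintype.card α - L) * #S := by
    nlinarith
  calc (#{i ∈ S | x ∉ D i} : ℝ) ≤ (Fintype.card α - L) * #S / Fintype.card α :=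
        (le_div_iff₀ hn).2 hkey
    _ = (1 - L / Fintype.card α) * #S := by field_simp

theorem exists_hittingSet_card_le {L : ℕ} (hL : 0 < L) (S : Finset ι)
    (hD : ∀ i ∈ S, L ≤ #(D i)) :
    ∃ R : Finset α, (∀ i ∈ S, (R ∩ D i).Nonempty) ∧
      (#R : ℝ) ≤ Fintype.card α / L * log #S + 1 := by
  induction S using Finset.strongInduction with
  | H S ih =>
  rcases S.eq_empty_or_nonempty with rfl | ⟨i₀, hi₀⟩
  · exact ⟨∅, by simp, by simp⟩
  obtain ⟨y, hy⟩ := card_pos.1 (hL.trans_le (hD i₀ hi₀))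
  have : Nonempty α := ⟨y⟩
  obtain ⟨x, hx⟩ := exists_card_filter_notMem_le D hD
  set S' := {i ∈ S | x ∉ D i} with hS'
  have hn : (0 : ℝ) < Fintype.card α := by exact_mod_cast Fintype.card_pos
  have hS : (0 : ℝ) < #S := by exact_mod_cast card_pos.2 ⟨i₀, hi₀⟩
  have hlogS : 0 ≤ log #S := log_nonneg (by exact_mod_cast card_pos.2 ⟨i₀, hi₀⟩)
  rcases S'.eq_empty_or_nonempty with hempty | hS'ne
  · refine ⟨{x}, fun i hi => ⟨x, ?_⟩, ?_⟩
    · have hi' : i ∉ S' := by simp [hempty]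
      simpa [hS', hi] using hi'
    · have : 0 ≤ Fintype.card α / L * log #S := by positivity
      simp [this]
  have hsub : S' ⊂ S := by
    refine (filter_subset _ _).ssubset_of_ne fun heq => ?_
    rw [hS', heq] at hx
    have : (0 : ℝ) < L / Fintype.card α * #S := by positivity
    linarith
  obtain ⟨R', hR'hit, hR'card⟩ := ih S' hsub (fun i hi => hD i (filter_subset _ _ hi))
  refine ⟨insert x R', fun i hi => ?_, ?_⟩
  · by_cases hxi : x ∈ D i
    · exact ⟨x, by simp [hxi]⟩
    · obtain ⟨y, hy⟩ := hR'hit i (by simp [hS', hi, hxi])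
      exact ⟨y, by simp_all⟩
  have hlog : log #S' + L / Fintype.card α ≤ log #S :=
    log_add_le_log_of_le_one_sub_mul (by exact_mod_cast hS'ne.card_pos) hS hx
  have hcard : (#(insert x R') : ℝ) ≤ #R' + 1 := by exact_mod_cast card_insert_le x R'
  have hone : (Fintype.card α : ℝ) / L * (L / Fintype.card α) = 1 := by
    field_simp
  calc (#(insert x R') : ℝ) ≤ Fintype.card α / L * log #S' + 1 + 1 := by linarith
    _ = Fintype.card α / L * (log #S' + L / Fintype.card α) + 1 := by rw [mul_add, hone]
    _ ≤ Fintype.card α / L * log #S + 1 := by gcongr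

end HittingSet

theorem stmt0_general {V : Type*} [Fintype V] [DecidableEq V] (n L q : ℕ)
    (hn : Fintype.card V = n) (hL : 1 ≤ L)
    (D : Fin q → Finset V) (hD : ∀ i, L ≤ (D i).card) :
    ∃ R : Finset V, (∀ i, (R ∩ D i).Nonempty) ∧
      (R.card : ℝ) ≤ ((n : ℝ) / (L : ℝ)) * Real.log q + 1 := by
  obtain ⟨R, hhit, hcard⟩ := exists_hittingSet_card_le D hL univ fun i _ => hD i
  refine ⟨R, fun i => hhit i (mem_univ i), ?_⟩
  simpa [hn] using hcard

/-- Greedy hitting-set lemma: if `D₁, …, D_q ⊆ V` each have at least `L`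
elements, then there is a set `R ⊆ V` hitting every `D i` with
`|R| ≤ (n/L)·ln q + 1` (as real numbers). -/
theorem stmt0 {V : Type*} [Fintype V] [DecidableEq V] (n L q : ℕ)
    (hn : Fintype.card V = n) (hn1 : 1 ≤ n) (hL : 1 ≤ L) (hq : 1 ≤ q)
    (D : Fin q → Finset V) (hD : ∀ i, L ≤ (D i).card) :
    ∃ R : Finset V, (∀ i, (R ∩ D i).Nonempty) ∧
      (R.card : ℝ) ≤ ((n : ℝ) / (L : ℝ)) * Real.log q + 1 :=
  stmt0_general n L q hn hL D hD
end

section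
/- The set 𝒟_n = {D(x) : x ∈ V_{√n}} contains at most n paths, each consisting of exactly ⌈√n⌉ edges, and it has the following property: for every long triple (s,t,e) there exist a vertex x ∈ V_{√n} and an s-to-t path P' in G∖{e} of length exactly d_G(s,t,e) such that D(x) is a contiguous subpath of P' (contained in the detour part of P'). -/
open scoped ENat ENNReal

namespace RP

variable {V : Type*}

/-- `p` is a walk from `u` to `w` in the graph with edge relation `E`:
a nonempty list of vertices, consecutive vertices joined by edges. -/
def IsWalk (E : V → V → Prop) (p : List V) (u w : V) : Prop :=
  p ≠ [] ∧ p.head? = some u ∧ p.getLast? = some w ∧ p.Chain' E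

/-- The number of edges of a path given as a list of vertices. -/
def pathLen (p : List V) : ℕ := p.length - 1

/-- Unweighted distance: minimum number of edges of a `u`-to-`w` path (`⊤` if none). -/
noncomputable def dist (E : V → V → Prop) (u w : V) : ℕ∞ :=
  sInf ((fun p => (pathLen p : ℕ∞)) '' {p | IsWalk E p u w})

/-- Total weight of a path, for edge weights `w`. -/
def wt (w : V → V → ℝ) : List V → ℝ
  | [] => 0
  | [_] => 0
  | a :: b :: rest => w a b + wt w (b :: rest)

/-- Weighted distance: infimum of path weights (`⊤` if there is no path). -/
noncomputable def wdist (E : V → V → Prop) (w : V → V → ℝ) (u x : V) : ℝ≥0∞ :=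
  sInf ((fun p => ENNReal.ofReal (wt w p)) '' {p | IsWalk E p u x})

/-- `G' = G ∖ E(P)`: the edge relation of `G` with all edges of the path
`P = ⟨v 0, …, v k⟩` removed. -/
def Eres (E : V → V → Prop) (v : ℕ → V) (k : ℕ) : V → V → Prop :=
  fun a b => E a b ∧ ¬∃ i, i < k ∧ a = v i ∧ b = v (i + 1)

/-- `G ∖ {e}` where `e = (v a, v (a+1))` is an edge of `P`. -/
def Edel (E : V → V → Prop) (v : ℕ → V) (a : ℕ) : V → V → Prop :=
  fun x y => E x y ∧ ¬(x = v a ∧ y = v (a + 1))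

/-- `x` lies on the path `P = ⟨v 0, …, v k⟩`. -/
def onPath (v : ℕ → V) (k : ℕ) (x : V) : Prop := ∃ i ≤ k, x = v i

/-- `Q` decomposes as `⟨v 0, …, v i⟩ ∘ D ∘ ⟨v j, …, v k⟩` where the detour `D` starts at
`v i`, ends at `v j`, and meets `P` only in its first and last vertices. -/
def Detoured (v : ℕ → V) (k : ℕ) (Q D : List V) : Prop :=
  ∃ i j, i ≤ k ∧ j ≤ k ∧
    Q = ((List.range i).map v) ++ D ++ ((List.range' (j + 1) (k - j)).map v) ∧
    D.head? = some (v i) ∧ D.getLast? = some (v j) ∧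
    ∀ x ∈ D, onPath v k x → x = v i ∨ x = v j

/-- `Q` is a replacement path for the triple `(s, t, e)` with `e = (v a, v (a+1))`:
a shortest `s`-to-`t` path in `G ∖ {e}`. -/
def IsRP (E : V → V → Prop) (v : ℕ → V) (s t : V) (a : ℕ) (Q : List V) : Prop :=
  IsWalk (Edel E v a) Q s t ∧ (pathLen Q : ℕ∞) = dist (Edel E v a) s t

/-- The triple `(s, t, e)` with `e = (v a, v (a+1))` is *long*: a replacement path exists and
every replacement path has its detour part containing more than `sqn` edges. -/
def LongTriple (E : V → V → Prop) (v : ℕ → V) (k : ℕ) (s t : V) (sqn a : ℕ) : Prop :=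
  (∃ Q, IsRP E v s t a Q) ∧
    ∀ Q D, IsRP E v s t a Q → Detoured v k Q D → sqn < pathLen D

/-- `V_{√n}`: vertices `x` having an index `i ≤ k` with `d_{G'}(v i, x) = sqn` and
`d_{G'}(v j, x) > sqn` for all `j < i` (such an `i` is exactly `ρ(x)`). -/
def Vsqrt (E : V → V → Prop) (v : ℕ → V) (k sqn : ℕ) : Set V :=
  {x | ∃ i ≤ k, dist (Eres E v k) (v i) x = (sqn : ℕ∞) ∧
      ∀ j < i, (sqn : ℕ∞) < dist (Eres E v k) (v j) x}

/-- The set of vertices `v (i+1), …, v k` deleted from `G^w` to form `G^w_i`. -/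
def delVerts (v : ℕ → V) (k i : ℕ) (x : V) : Prop := ∃ l, i < l ∧ l ≤ k ∧ x = v l

/-- Edge relation of `G^w_i`: `G` with the vertices `v (i+1), …, v k` deleted. -/
def Ei (E : V → V → Prop) (v : ℕ → V) (k i : ℕ) : V → V → Prop :=
  fun a b => E a b ∧ ¬delVerts v k i a ∧ ¬delVerts v k i b

open Classical in
/-- Weights of `G^w`: `ε` on the edges of `P`, `1` on every other edge. -/
noncomputable def wP (v : ℕ → V) (k : ℕ) (ε : ℝ) : V → V → ℝ :=
  fun a b => if ∃ i, i < k ∧ a = v i ∧ b = v (i + 1) then ε else 1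

end RP

/-!
Write `e = (v a, v (a + 1))`. Among the replacement paths, pick one,
`Q = ⟨v 0, …, v (i-1)⟩ ∘ Dt ∘ ⟨v (j+1), …, v k⟩`, whose detour starts as late as possible, and
let `y` be the vertex `⌈√n⌉` steps along `Dt`. The first `⌈√n⌉` edges of `Dt` avoid `P`, and a
`G'`-walk from some `v l`, `l ≤ i`, to `y` shorter than `⌈√n⌉ + (i - l)` would shortcut `Q`;
hence `y ∈ V_{√n}` with `ρ(y) = i`. Replacing the first `⌈√n⌉` edges of `Dt` by `D(y)` keeps the
length, and yields a replacement path with detour `D(y) ∘ Dt[⌈√n⌉..]` unless `D(y)` meets `P` at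
some `v l ∉ {v i, v j}`. That is impossible: `l < i` contradicts `ρ(y) = i`; `i < l ≤ a` gives a
replacement path whose detour starts at or after `v l`; and `a < l` gives one whose detour lies
inside `D(y)`, hence has fewer than `⌈√n⌉` edges.
-/

namespace RP

open List

variable {V : Type*}

section Walks

variable {E : V → V → Prop} {p q A B : List V} {u w x : V}

lemma isWalk_iff :
    IsWalk E p u w ↔ p ≠ [] ∧ p.head? = some u ∧ p.getLast? = some w ∧ p.IsChain E :=
  Iff.rfl

lemma IsWalk.isChain (h : IsWalk E p u w) : p.IsChain E :=
  (isWalk_iff.1 h).2.2.2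

lemma IsWalk.head?_eq (h : IsWalk E p u w) : p.head? = some u :=
  h.2.1

lemma IsWalk.getLast?_eq (h : IsWalk E p u w) : p.getLast? = some w :=
  h.2.2.1

lemma IsWalk.mono {E' : V → V → Prop} (hE : ∀ a b, E a b → E' a b) (h : IsWalk E p u w) :
    IsWalk E' p u w :=
  ⟨h.1, h.2.1, h.2.2.1, h.2.2.2.imp hE⟩

lemma isWalk_singleton (u : V) : IsWalk E [u] u u :=
  ⟨cons_ne_nil u [], rfl, rfl, isChain_singleton u⟩

lemma isWalk_append_cons_iff :
    IsWalk E (A ++ x :: B) u w ↔ IsWalk E (A ++ [x]) u x ∧ IsWalk E (x :: B) x w := by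
  rw [isWalk_iff, isWalk_iff, isWalk_iff, isChain_split]
  simp [head?_append]
  tauto

lemma IsWalk.append (h₁ : IsWalk E p u x) (h₂ : IsWalk E (x :: q) x w) :
    IsWalk E (p ++ q) u w := by
  obtain ⟨p', rfl⟩ := getLast?_eq_some_iff.1 h₁.getLast?_eq
  simpa using isWalk_append_cons_iff.2 ⟨h₁, h₂⟩

lemma pathLen_append (hp : p ≠ []) : pathLen (p ++ q) = pathLen p + q.length := by
  have := length_pos_iff.2 hp
  simp only [pathLen, length_append]
  omega

lemma exists_eq_append_cons_of_lt_length {l : List V} {n : ℕ} (h : n + 1 < l.length) :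
    ∃ A y B, l = A ++ y :: B ∧ A.length = n ∧ B ≠ [] := by
  refine ⟨l.take n, l[n], l.drop (n + 1), ?_, by simp; omega, ?_⟩
  · rw [← drop_eq_getElem_cons, take_append_drop]
  · rw [← length_pos_iff, length_drop]; omega

lemma exists_eq_append_cons_append_cons_of_not_nodup {l : List V} (h : ¬ l.Nodup) :
    ∃ A x B C, l = A ++ x :: (B ++ x :: C) := by
  induction l with
  | nil => exact absurd nodup_nil h
  | cons a l ih =>
    by_cases ha : a ∈ l
    · obtain ⟨B, C, rfl⟩ := append_of_mem ha
      exact ⟨[], a, B, C, rfl⟩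
    · obtain ⟨A, x, B, C, rfl⟩ := ih fun hl => h (nodup_cons.2 ⟨ha, hl⟩)
      exact ⟨a :: A, x, B, C, rfl⟩

lemma IsWalk.nodup_of_forall_pathLen_le (h : IsWalk E p u w)
    (hmin : ∀ q, IsWalk E q u w → pathLen p ≤ pathLen q) : p.Nodup := by
  by_contra hnd
  obtain ⟨A, x, B, C, rfl⟩ := exists_eq_append_cons_append_cons_of_not_nodup hnd
  obtain ⟨hA, hBC⟩ := isWalk_append_cons_iff.1 h
  obtain ⟨-, hC⟩ := isWalk_append_cons_iff.1 (show IsWalk E ((x :: B) ++ x :: C) x w from hBC)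
  have := hmin _ (hA.append hC)
  simp [pathLen] at this
  omega

lemma IsWalk.eres {v : ℕ → V} {k : ℕ} (h : IsWalk E p u w)
    (hoff : ∀ x ∈ p.tail, ¬ onPath v k x) : IsWalk (Eres E v k) p u w :=
  ⟨h.1, h.2.1, h.2.2.1, h.2.2.2.imp_of_mem_tail_imp fun _ b _ hb hab =>
    ⟨hab, fun ⟨c, hc, _, hbc⟩ => hoff b hb ⟨c + 1, hc, hbc⟩⟩⟩

lemma dist_le_pathLen (h : IsWalk E p u w) : dist E u w ≤ pathLen p :=
  sInf_le ⟨p, h, rfl⟩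

lemma le_dist {d : ℕ∞} (h : ∀ p, IsWalk E p u w → d ≤ pathLen p) : d ≤ dist E u w :=
  le_sInf <| by rintro _ ⟨p, hp, rfl⟩; exact h p hp

end Walks

section Splice

variable {E : V → V → Prop} {v : ℕ → V} {k i j p q : ℕ} {B : List V}

def splice (v : ℕ → V) (k i : ℕ) (B : List V) (j : ℕ) : List V :=
  (range i).map v ++ B ++ (range' (j + 1) (k - j)).map v

lemma length_splice : (splice v k i B j).length = i + B.length + (k - j) := by
  simp [splice, Nat.add_assoc]

lemma pathLen_splice (hB : B ≠ []) : pathLen (splice v k i B j) = i + pathLen B + (k - j) := by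
  have := length_pos_iff.2 hB
  simp only [pathLen, length_splice]
  omega

lemma getElem_splice_of_le (hB : B.head? = some (v i)) (hp : p ≤ i)
    (h : p < (splice v k i B j).length) : (splice v k i B j)[p] = v p := by
  obtain ⟨B', rfl⟩ := head?_eq_some_iff.1 hB
  rcases hp.lt_or_eq with hp | rfl
  · simp [splice, hp]
  · simp [splice]

lemma getElem_splice_add (hq : q < B.length) (h : i + q < (splice v k i B j).length) :
    (splice v k i B j)[i + q] = B[q] := by
  simp [splice, hq]

lemma getElem_splice_of_ge (hB : B.getLast? = some (v j)) (hp : i + B.length ≤ p + 1)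
    (h : p < (splice v k i B j).length) :
    (splice v k i B j)[p] = v (j + p + 1 - (i + B.length)) := by
  obtain ⟨B', rfl⟩ := getLast?_eq_some_iff.1 hB
  have h' := h
  simp only [length_splice, length_append, length_singleton] at hp h'
  simp only [splice, getElem_append, length_append, length_map, length_range, length_singleton]
  split_ifs <;> first | (exfalso; omega) | (simp; congr 1; omega)

lemma onPath_getElem_splice (hB₀ : B.head? = some (v i)) (hB₁ : B.getLast? = some (v j))
    (hik : i ≤ k) (hjk : j ≤ k) (hp : p ≤ i ∨ i + B.length ≤ p + 1)
    (h : p < (splice v k i B j).length) : onPath v k (splice v k i B j)[p] := by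
  rcases hp with hp | hp
  · exact ⟨p, by omega, getElem_splice_of_le hB₀ hp h⟩
  · rw [length_splice] at h
    exact ⟨_, by omega, getElem_splice_of_ge hB₁ hp _⟩

lemma isWalk_map_range' {s n : ℕ} (h : ∀ c, s ≤ c → c < s + n → E (v c) (v (c + 1))) :
    IsWalk E ((range' s (n + 1)).map v) (v s) (v (s + n)) := by
  refine isWalk_iff.2 ⟨by simp, by simp [range'_succ], by simp [getLast?_range'], ?_⟩
  rw [isChain_iff_getElem]
  intro c hc
  simp only [length_map, length_range'] at hc
  simpa [Nat.add_assoc] using h (s + c) (by omega) (by omega)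

lemma isWalk_splice (hpre : ∀ c < i, E (v c) (v (c + 1)))
    (hsuf : ∀ c, j ≤ c → c < k → E (v c) (v (c + 1)))
    (hB : IsWalk E B (v i) (v j)) (hjk : j ≤ k) :
    IsWalk E (splice v k i B j) (v 0) (v k) := by
  obtain ⟨B', rfl⟩ := head?_eq_some_iff.1 hB.head?_eq
  have hP₁ : IsWalk E ((range (i + 1)).map v) (v 0) (v i) := by
    simpa [range_eq_range'] using
      isWalk_map_range' (v := v) (s := 0) (n := i) fun c _ hc => hpre c (by omega)
  have hP₂ : IsWalk E ((range' j (k - j + 1)).map v) (v j) (v k) := by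
    simpa [Nat.add_sub_cancel' hjk] using
      isWalk_map_range' (v := v) (s := j) (n := k - j) fun c hc₁ hc₂ => hsuf c hc₁ (by omega)
  have := (hP₁.append hB).append (by simpa [range'_succ] using hP₂)
  simpa [splice, range_succ] using this

end Splice

section ReplacementPaths

variable {E : V → V → Prop} {v : ℕ → V} {a : ℕ} {s t : V} {Q W : List V}

lemma IsRP.pathLen_le (hQ : IsRP E v s t a Q) (hW : IsWalk (Edel E v a) W s t) :
    pathLen Q ≤ pathLen W := by
  have := dist_le_pathLen hW
  rw [← hQ.2] at this
  exact_mod_cast this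

lemma IsRP.of_pathLen_le (hQ : IsRP E v s t a Q) (hW : IsWalk (Edel E v a) W s t)
    (hle : pathLen W ≤ pathLen Q) : IsRP E v s t a W :=
  ⟨hW, le_antisymm (hQ.2 ▸ by exact_mod_cast hle) (dist_le_pathLen hW)⟩

lemma IsRP.nodup (hQ : IsRP E v s t a Q) : Q.Nodup :=
  hQ.1.nodup_of_forall_pathLen_le fun _ => hQ.pathLen_le

end ReplacementPaths

structure IsShortestPath (E : V → V → Prop) (v : ℕ → V) (k : ℕ) : Prop where
  adj : ∀ c < k, E (v c) (v (c + 1))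
  le_pathLen : ∀ p, IsWalk E p (v 0) (v k) → k ≤ pathLen p

lemma isShortestPath_of_dist_eq {E : V → V → Prop} {v : ℕ → V} {k : ℕ}
    (hP : IsWalk E ((range (k + 1)).map v) (v 0) (v k)) (hk : dist E (v 0) (v k) = k) :
    IsShortestPath E v k :=
  ⟨(isChain_range_succ _ k).1 ((isChain_map v).1 hP.isChain),
    fun _ hp => by exact_mod_cast hk ▸ dist_le_pathLen hp⟩

namespace IsShortestPath

variable {E : V → V → Prop} {v : ℕ → V} {k a i j c : ℕ} {p Q B : List V}

lemma sub_le_pathLen (hP : IsShortestPath E v k) (hi : i ≤ k) (hj : j ≤ k)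
    (hp : IsWalk E p (v i) (v j)) : j - i ≤ pathLen p := by
  have := hP.le_pathLen _ <|
    isWalk_splice (fun c hc => hP.adj c (by omega)) (fun c _ hc => hP.adj c hc) hp hj
  rw [pathLen_splice hp.1] at this
  omega

lemma injOn (hP : IsShortestPath E v k) (hi : i ≤ k) (hj : j ≤ k) (h : v i = v j) : i = j := by
  have h₁ := hP.sub_le_pathLen hi hj
    (show IsWalk E [v i] (v i) (v j) from h ▸ isWalk_singleton _)
  have h₂ := hP.sub_le_pathLen hj hi
    (show IsWalk E [v j] (v j) (v i) from h ▸ isWalk_singleton _)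
  simp only [pathLen, length_singleton, Nat.sub_self] at h₁ h₂
  omega

lemma edel_adj (hP : IsShortestPath E v k) (ha : a < k) (hc : c < k) (hca : c ≠ a) :
    Edel E v a (v c) (v (c + 1)) :=
  ⟨hP.adj c hc, fun h => hca (hP.injOn hc.le ha.le h.1)⟩

lemma isWalk_splice_edel (hP : IsShortestPath E v k) (hB : IsWalk (Edel E v a) B (v i) (v j))
    (hia : i ≤ a) (haj : a < j) (hjk : j ≤ k) :
    IsWalk (Edel E v a) (splice v k i B j) (v 0) (v k) :=
  isWalk_splice (fun _ _ => hP.edel_adj (by omega) (by omega) (by omega))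
    (fun _ _ hck => hP.edel_adj (by omega) hck (by omega)) hB hjk

lemma isRP_splice (hP : IsShortestPath E v k) (hQ : IsRP E v (v 0) (v k) a Q)
    (hB : IsWalk (Edel E v a) B (v i) (v j)) (hia : i ≤ a) (haj : a < j) (hjk : j ≤ k)
    (hle : i + pathLen B + (k - j) ≤ pathLen Q) : IsRP E v (v 0) (v k) a (splice v k i B j) :=
  hQ.of_pathLen_le (hP.isWalk_splice_edel hB hia haj hjk) (by rwa [pathLen_splice hB.1])

end IsShortestPath

structure IsDetourAt (v : ℕ → V) (k i j : ℕ) (Q D : List V) : Prop where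
  start_le : i ≤ k
  end_le : j ≤ k
  eq_splice : Q = splice v k i D j
  head : D.head? = some (v i)
  getLast : D.getLast? = some (v j)
  avoid : ∀ x ∈ D, onPath v k x → x = v i ∨ x = v j

section Detours

variable {E : V → V → Prop} {v : ℕ → V} {k a i j i' j' q : ℕ} {u w x : V}
  {Q B D X Y : List V}

lemma detoured_iff : Detoured v k Q D ↔ ∃ i j, IsDetourAt v k i j Q D :=
  ⟨fun ⟨i, j, h₁, h₂, h₃, h₄, h₅, h₆⟩ => ⟨i, j, h₁, h₂, h₃, h₄, h₅, h₆⟩,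
    fun ⟨i, j, h⟩ => ⟨i, j, h.1, h.2, h.3, h.4, h.5, h.6⟩⟩

lemma IsDetourAt.ne_nil (h : IsDetourAt v k i j Q D) : D ≠ [] := by
  rintro rfl
  simpa using h.head

lemma IsDetourAt.pathLen_eq (h : IsDetourAt v k i j Q D) :
    pathLen Q = i + pathLen D + (k - j) := by
  rw [h.eq_splice, pathLen_splice h.ne_nil]

lemma IsDetourAt.infix (h : IsDetourAt v k i j Q D) : D <:+: Q :=
  h.eq_splice ▸ infix_append _ _ _

lemma IsDetourAt.isWalk (h : IsDetourAt v k i j Q D) (hQ : IsWalk E Q u w) :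
    IsWalk E D (v i) (v j) :=
  isWalk_iff.2 ⟨h.ne_nil, h.head, h.getLast, hQ.isChain.infix h.infix⟩

lemma IsDetourAt.not_onPath (h : IsDetourAt v k i j Q (X ++ x :: Y)) (hnd : Q.Nodup)
    (hX : X ≠ []) (hY : Y ≠ []) : ¬ onPath v k x := by
  have hDnd := hnd.sublist h.infix.sublist
  rw [nodup_middle, nodup_cons, mem_append, not_or] at hDnd
  obtain ⟨x₀, X, rfl⟩ := exists_cons_of_ne_nil hX
  obtain ⟨y₀, Y, rfl⟩ := exists_cons_of_ne_nil hY
  have h₀ : x₀ = v i := by simpa using h.head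
  have h₁ : v j ∈ y₀ :: Y := by
    have := h.getLast
    rw [getLast?_append_cons, getLast?_cons_cons] at this
    exact mem_of_getLast? this
  intro hx
  rcases h.avoid x (by simp) hx with rfl | rfl
  · exact hDnd.1.1 (by simp [h₀])
  · exact hDnd.1.2 h₁

lemma IsDetourAt.not_onPath_of_mem_tail (h : IsDetourAt v k i j Q (X ++ Y)) (hnd : Q.Nodup)
    (hY : Y ≠ []) (hx : x ∈ X.tail) : ¬ onPath v k x := by
  cases X with
  | nil => simp at hx
  | cons x₀ X =>
    obtain ⟨X₁, X₂, rfl⟩ := append_of_mem (tail_cons ▸ hx)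
    exact IsDetourAt.not_onPath (X := x₀ :: X₁) (Y := X₂ ++ Y) (by simpa using h) hnd
      (cons_ne_nil _ _) (by simp [hY])

lemma IsDetourAt.not_onPath_getElem (h : IsDetourAt v k i j Q D) (hnd : Q.Nodup)
    (hq₀ : 0 < q) (hq : q + 1 < D.length) : ¬ onPath v k D[q] := by
  refine IsDetourAt.not_onPath (i := i) (j := j) (X := D.take q) (Y := D.drop (q + 1))
    ?_ hnd ?_ ?_
  · rwa [← drop_eq_getElem_cons, take_append_drop]
  · rw [← length_pos_iff, length_take]; omega
  · rw [← length_pos_iff, length_drop]; omega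

lemma IsDetourAt.getElem_add (h : IsDetourAt v k i j Q D) (hq : q < D.length)
    (hq' : i + q < Q.length) : Q[i + q] = D[q] := by
  obtain ⟨-, -, rfl, -⟩ := h
  exact getElem_splice_add hq hq'

lemma IsDetourAt.start_le_and_lt_end (h : IsDetourAt v k i j Q D)
    (hQ : IsWalk (Edel E v a) Q u w) (ha : a < k) : i ≤ a ∧ a < j := by
  have hD := length_pos_iff.2 h.ne_nil
  obtain ⟨hik, hjk, rfl, hD₀, hD₁, -⟩ := h
  have hlen := length_splice (v := v) (k := k) (i := i) (B := D) (j := j)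
  constructor
  · by_contra! hai
    have := (hQ.isChain.getElem a (by omega)).2
    rw [getElem_splice_of_le hD₀ (by omega), getElem_splice_of_le hD₀ (by omega)] at this
    exact this ⟨rfl, rfl⟩
  · by_contra! hja
    have := (hQ.isChain.getElem (i + D.length - 1 + (a - j)) (by omega)).2
    rw [getElem_splice_of_ge hD₁ (by omega), getElem_splice_of_ge hD₁ (by omega)] at this
    exact this ⟨congrArg v (by omega), congrArg v (by omega)⟩

lemma IsDetourAt.within_splice (h : IsDetourAt v k i' j' (splice v k i B j) D)
    (hnd : (splice v k i B j).Nodup) (hB₀ : B.head? = some (v i))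
    (hB₁ : B.getLast? = some (v j)) (hik : i ≤ k) (hjk : j ≤ k) (hD : 3 ≤ D.length) :
    i ≤ i' ∧ i' + D.length ≤ i + B.length := by
  -- Positions `i' + 1` and `i' + D.length - 2` hold interior vertices of `D`, which are off `P`,
  -- while every position outside `B` holds a vertex of `P`.
  have hlen : (splice v k i B j).length = i' + D.length + (k - j') := by
    rw [h.eq_splice, length_splice]
  have hoff : ∀ q, 0 < q → q + 1 < D.length → ∀ hq' : i' + q < (splice v k i B j).length,
      ¬ onPath v k (splice v k i B j)[i' + q] := fun q hq₀ hq hq' => by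
    rw [h.getElem_add (by omega) hq']
    exact h.not_onPath_getElem hnd hq₀ hq
  constructor
  · by_contra! hlt
    exact hoff 1 one_pos (by omega) (by omega)
      (onPath_getElem_splice hB₀ hB₁ hik hjk (Or.inl (by omega)) _)
  · by_contra! hlt
    exact hoff (D.length - 2) (by omega) (by omega) (by omega)
      (onPath_getElem_splice hB₀ hB₁ hik hjk (Or.inr (by omega)) _)

end Detours

section ReplacementOfDetours

variable {E : V → V → Prop} {v : ℕ → V} {k a i j l sqn : ℕ} {x y : V}
  {Q R A B C F Dt : List V}

lemma edel_of_eres (ha : a < k) (h : Eres E v k x y) : Edel E v a x y :=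
  ⟨h.1, fun ⟨h₁, h₂⟩ => h.2 ⟨a, ha, h₁, h₂⟩⟩

lemma exists_isDetourAt_max {s t : V} (hQ : ∃ Q, IsRP E v s t a Q)
    (hDec : ∀ Q, IsRP E v s t a Q → ∃ D, Detoured v k Q D) :
    ∃ i j Q D, IsRP E v s t a Q ∧ IsDetourAt v k i j Q D ∧
      ∀ i' j' Q' D', IsRP E v s t a Q' → IsDetourAt v k i' j' Q' D' → i' ≤ i := by
  set S := {i | ∃ j Q D, IsRP E v s t a Q ∧ IsDetourAt v k i j Q D}
  have hne : S.Nonempty := by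
    obtain ⟨Q, hQ⟩ := hQ
    obtain ⟨D, hD⟩ := hDec Q hQ
    obtain ⟨i, j, h⟩ := detoured_iff.1 hD
    exact ⟨i, j, Q, D, hQ, h⟩
  have hbdd : BddAbove S := ⟨k, fun _ ⟨_, _, _, _, h⟩ => h.start_le⟩
  obtain ⟨j, Q, D, hQ, h⟩ := Nat.sSup_mem hne hbdd
  exact ⟨_, j, Q, D, hQ, h, fun i' j' Q' D' hQ' h' => le_csSup hbdd ⟨j', Q', D', hQ', h'⟩⟩

lemma LongTriple.exists_detour_within_splice (hlong : LongTriple E v k (v 0) (v k) sqn a)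
    (hsqn : 1 ≤ sqn) (hDec : ∀ Q, IsRP E v (v 0) (v k) a Q → ∃ D, Detoured v k Q D)
    (hW : IsRP E v (v 0) (v k) a (splice v k i B j)) (hB₀ : B.head? = some (v i))
    (hB₁ : B.getLast? = some (v j)) (hik : i ≤ k) (hjk : j ≤ k) :
    ∃ i' j' D, IsDetourAt v k i' j' (splice v k i B j) D ∧
      i ≤ i' ∧ sqn < pathLen D ∧ i' + D.length ≤ i + B.length := by
  obtain ⟨D, hD⟩ := hDec _ hW
  obtain ⟨i', j', h⟩ := detoured_iff.1 hD
  have hlen := hlong.2 _ _ hW hD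
  have := h.within_splice hW.nodup hB₀ hB₁ hik hjk (by simp only [pathLen] at hlen; omega)
  exact ⟨i', j', D, h, this.1, hlen, this.2⟩

lemma dist_eres_detour_vertex (hP : IsShortestPath E v k) (ha : a < k)
    (hQ : IsRP E v (v 0) (v k) a Q) (hdet : IsDetourAt v k i j Q (A ++ y :: B)) (hB : B ≠ []) :
    dist (Eres E v k) (v i) y = A.length ∧
      ∀ l < i, (A.length : ℕ∞) < dist (Eres E v k) (v l) y := by
  obtain ⟨hia, haj⟩ := hdet.start_le_and_lt_end hQ.1 ha
  obtain ⟨hA, hyB⟩ := isWalk_append_cons_iff.1 (hdet.isWalk hQ.1)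
  have hdet' : IsDetourAt v k i j Q ((A ++ [y]) ++ B) := by simpa using hdet
  have hAres : IsWalk (Eres E v k) (A ++ [y]) (v i) y :=
    (hA.mono fun _ _ h => h.1).eres fun _ hx => hdet'.not_onPath_of_mem_tail hQ.nodup hB hx
  have hlow : ∀ l ≤ i, ((A.length + (i - l) : ℕ) : ℕ∞) ≤ dist (Eres E v k) (v l) y :=
    fun l hl => le_dist fun R hR => by
      have := hQ.pathLen_le <|
        hP.isWalk_splice_edel ((hR.mono fun _ _ => edel_of_eres ha).append hyB)
          (hl.trans hia) haj hdet.end_le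
      have hRpos := length_pos_iff.2 hR.1
      rw [pathLen_splice (by simp [hR.1]), pathLen_append hR.1, hdet.pathLen_eq] at this
      simp only [pathLen, length_append, length_cons] at this ⊢
      exact_mod_cast (by omega)
  refine ⟨le_antisymm ?_ (by simpa using hlow i le_rfl), fun l hl => ?_⟩
  · simpa [pathLen] using dist_le_pathLen hAres
  · exact lt_of_lt_of_le (by exact_mod_cast (by omega : A.length < A.length + (i - l)))
      (hlow l hl.le)

lemma isRP_replace_detour_prefix (hP : IsShortestPath E v k) (ha : a < k)
    (hQ : IsRP E v (v 0) (v k) a Q) (hdet : IsDetourAt v k i j Q (A ++ y :: B))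
    (hR : IsWalk (Eres E v k) R (v i) y) (hRlen : pathLen R = A.length)
    (hRavoid : ∀ x ∈ R, onPath v k x → x = v i ∨ x = v j) :
    IsRP E v (v 0) (v k) a (splice v k i (R ++ B) j) ∧
      IsDetourAt v k i j (splice v k i (R ++ B) j) (R ++ B) := by
  obtain ⟨hia, haj⟩ := hdet.start_le_and_lt_end hQ.1 ha
  have hyB := (isWalk_append_cons_iff.1 (hdet.isWalk hQ.1)).2
  have hRB := (hR.mono fun _ _ => edel_of_eres ha).append hyB
  refine ⟨hP.isRP_splice hQ hRB hia haj hdet.end_le ?_,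
    hdet.start_le, hdet.end_le, rfl, hRB.head?_eq, hRB.getLast?_eq, ?_⟩
  · rw [hdet.pathLen_eq, pathLen_append hR.1, hRlen]
    simp [pathLen]
  · intro x hx hon
    rcases mem_append.1 hx with hx | hx
    · exact hRavoid x hx hon
    · exact hdet.avoid x (by simp [hx]) hon

lemma exists_later_detour (hP : IsShortestPath E v k) (ha : a < k) (hsqn : 1 ≤ sqn)
    (hDec : ∀ Q, IsRP E v (v 0) (v k) a Q → ∃ D, Detoured v k Q D)
    (hlong : LongTriple E v k (v 0) (v k) sqn a)
    (hQ : IsRP E v (v 0) (v k) a Q) (hdet : IsDetourAt v k i j Q (A ++ y :: B))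
    (hC : IsWalk E (C ++ [v l]) (v i) (v l)) (hF : IsWalk (Eres E v k) (v l :: F) (v l) y)
    (hCF : C.length + F.length = A.length) (hlk : l ≤ k) (hla : l ≤ a) :
    ∃ i' j' Q' D', IsRP E v (v 0) (v k) a Q' ∧ IsDetourAt v k i' j' Q' D' ∧ l ≤ i' := by
  have haj := (hdet.start_le_and_lt_end hQ.1 ha).2
  have hyB := (isWalk_append_cons_iff.1 (hdet.isWalk hQ.1)).2
  have hFB := (hF.mono fun _ _ => edel_of_eres ha).append hyB
  have hli := hP.sub_le_pathLen hdet.start_le hlk hC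
  have hW := hP.isRP_splice hQ hFB hla haj hdet.end_le <| by
    rw [hdet.pathLen_eq]
    simp only [pathLen, length_append, length_cons, length_nil] at hli ⊢
    omega
  obtain ⟨i', j', D', h', hli', -⟩ :=
    hlong.exists_detour_within_splice hsqn hDec hW (by simp) hFB.getLast?_eq hlk hdet.end_le
  exact ⟨i', j', _, D', hW, h', hli'⟩

lemma false_of_meets_path_after_edge (hP : IsShortestPath E v k) (ha : a < k) (hsqn : 1 ≤ sqn)
    (hDec : ∀ Q, IsRP E v (v 0) (v k) a Q → ∃ D, Detoured v k Q D)
    (hlong : LongTriple E v k (v 0) (v k) sqn a)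
    (hQ : IsRP E v (v 0) (v k) a Q) (hdet : IsDetourAt v k i j Q (A ++ y :: B))
    (hA : A.length = sqn) (hC : IsWalk (Eres E v k) (C ++ [v l]) (v i) (v l))
    (hF : IsWalk E (v l :: F) (v l) y) (hF' : F ≠ []) (hCF : C.length + F.length = A.length)
    (hlk : l ≤ k) (hal : a < l) : False := by
  have hia := (hdet.start_le_and_lt_end hQ.1 ha).1
  have hyB := (isWalk_append_cons_iff.1 (hdet.isWalk hQ.1)).2
  have hjl := hP.sub_le_pathLen hlk hdet.end_le (hF.append (hyB.mono fun _ _ h => h.1))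
  have hW := hP.isRP_splice hQ (hC.mono fun _ _ => edel_of_eres ha) hia hal hlk <| by
    rw [hdet.pathLen_eq]
    simp only [pathLen, length_append, length_cons, length_nil] at hjl ⊢
    omega
  obtain ⟨i', j', D', -, hii', hlen, hD'⟩ := hlong.exists_detour_within_splice hsqn hDec hW
    hC.head?_eq hC.getLast?_eq hdet.start_le hlk
  have := length_pos_iff.2 hF'
  simp only [pathLen, length_append, length_singleton] at hlen hD'
  omega

lemma exists_mem_Vsqrt_infix_detour (hP : IsShortestPath E v k) (ha : a < k) (hsqn : 1 ≤ sqn)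
    {D : V → List V}
    (hD : ∀ x ∈ Vsqrt E v k sqn, ∃ i ≤ k,
        (∀ j < i, (sqn : ℕ∞) < dist (Eres E v k) (v j) x) ∧
        dist (Eres E v k) (v i) x = (sqn : ℕ∞) ∧
        IsWalk (Eres E v k) (D x) (v i) x ∧ pathLen (D x) = sqn)
    (hDec : ∀ Q, IsRP E v (v 0) (v k) a Q → ∃ D, Detoured v k Q D)
    (hlong : LongTriple E v k (v 0) (v k) sqn a)
    (hQ : IsRP E v (v 0) (v k) a Q) (hdet : IsDetourAt v k i j Q Dt)
    (hmax : ∀ i' j' Q' D', IsRP E v (v 0) (v k) a Q' → IsDetourAt v k i' j' Q' D' → i' ≤ i) :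
    ∃ x ∈ Vsqrt E v k sqn, ∃ P' Dt' : List V,
      IsRP E v (v 0) (v k) a P' ∧ Detoured v k P' Dt' ∧ D x <:+: Dt' := by
  have hlen := hlong.2 Q Dt hQ (detoured_iff.2 ⟨i, j, hdet⟩)
  obtain ⟨A, y, B, rfl, hA, hB⟩ :=
    exists_eq_append_cons_of_lt_length (l := Dt) (n := sqn)
      (by simp only [pathLen] at hlen; omega)
  obtain ⟨hy, hymin⟩ := dist_eres_detour_vertex hP ha hQ hdet hB
  rw [hA] at hy hymin
  have hyV : y ∈ Vsqrt E v k sqn := ⟨i, hdet.start_le, hy, hymin⟩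
  obtain ⟨i', -, hmin', hi', hR, hRlen⟩ := hD y hyV
  obtain rfl : i = i' := le_antisymm (not_lt.1 fun h => (hymin i' h).ne hi'.symm)
    (not_lt.1 fun h => (hmin' i h).ne hy.symm)
  by_cases hgood : ∀ x ∈ D y, onPath v k x → x = v i ∨ x = v j
  · obtain ⟨hRP, hdet'⟩ :=
      isRP_replace_detour_prefix hP ha hQ hdet hR (hRlen.trans hA.symm) hgood
    exact ⟨y, hyV, _, _, hRP, detoured_iff.2 ⟨i, j, hdet'⟩, (prefix_append _ _).isInfix⟩
  exfalso
  push Not at hgood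
  obtain ⟨_, hx, ⟨l, hlk, rfl⟩, hli, hlj⟩ := hgood
  obtain ⟨C, F, hCF⟩ := append_of_mem hx
  rw [hCF] at hR hRlen
  obtain ⟨hC, hF⟩ := isWalk_append_cons_iff.1 hR
  have hlen' : C.length + F.length = A.length := by simp [pathLen] at hRlen; omega
  have hF' : F ≠ [] := by
    rintro rfl
    have hyl : y = v l := by simpa [eq_comm] using hF.getLast?_eq
    exact (hdet.avoid y (by simp) ⟨l, hlk, hyl⟩).elim (fun h => hli (hyl.symm.trans h))
      (fun h => hlj (hyl.symm.trans h))
  rcases lt_trichotomy l i with hl | rfl | hl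
  · have := (hymin l hl).trans_le (dist_le_pathLen hF)
    simp only [pathLen, length_cons, Nat.add_sub_cancel, Nat.cast_lt] at this
    omega
  · exact hli rfl
  rcases le_or_gt l a with hla | hal
  · obtain ⟨i'', j'', Q', D', hQ', h', hli''⟩ := exists_later_detour hP ha hsqn hDec hlong hQ
      hdet (hC.mono fun _ _ h => h.1) hF hlen' hlk hla
    have := hmax i'' j'' Q' D' hQ' h'
    omega
  · exact false_of_meets_path_after_edge hP ha hsqn hDec hlong hQ hdet hA hC (hF.mono fun _ _ h => h.1)
      hF' hlen' hlk hal

end ReplacementOfDetours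

end RP

/-- The set `𝒟_n = {D x : x ∈ V_{√n}}` contains at most `n` paths, each of
exactly `⌈√n⌉` edges, and for every long triple `(s,t,e)` there are `x ∈ V_{√n}` and a
replacement path `P'` for `(s,t,e)` (an `s`-to-`t` path in `G∖{e}` of length `d_G(s,t,e)`)
such that `D x` is a contiguous subpath of `P'` contained in its detour part. -/
theorem stmt2 {V : Type*} [Fintype V]
    (E : V → V → Prop) (n k : ℕ) (hn : Fintype.card V = n)
    (v : ℕ → V) (s t : V) (hs : v 0 = s) (ht : v k = t)
    (hPwalk : RP.IsWalk E ((List.range (k + 1)).map v) s t)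
    (hPshort : RP.dist E s t = (k : ℕ∞))
    (sqn : ℕ) (hsqn : sqn = ⌈Real.sqrt n⌉₊)
    (D : V → List V)
    (hD : ∀ x ∈ RP.Vsqrt E v k sqn, ∃ i ≤ k,
        (∀ j < i, (sqn : ℕ∞) < RP.dist (RP.Eres E v k) (v j) x) ∧
        RP.dist (RP.Eres E v k) (v i) x = (sqn : ℕ∞) ∧
        RP.IsWalk (RP.Eres E v k) (D x) (v i) x ∧ RP.pathLen (D x) = sqn)
    (hDecomp : ∀ a < k, ∀ Q, RP.IsRP E v s t a Q → ∃ Dt, RP.Detoured v k Q Dt) :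
    (D '' RP.Vsqrt E v k sqn).Finite ∧
    (D '' RP.Vsqrt E v k sqn).ncard ≤ n ∧
    (∀ p ∈ D '' RP.Vsqrt E v k sqn, RP.pathLen p = sqn) ∧
    (∀ a < k, RP.LongTriple E v k s t sqn a →
      ∃ x ∈ RP.Vsqrt E v k sqn, ∃ P' Dt : List V,
        RP.IsWalk (RP.Edel E v a) P' s t ∧
        (RP.pathLen P' : ℕ∞) = RP.dist (RP.Edel E v a) s t ∧
        RP.Detoured v k P' Dt ∧ D x <:+: Dt) := by
  subst hs ht
  have hP := RP.isShortestPath_of_dist_eq hPwalk hPshort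
  have hsqn1 : 1 ≤ sqn := by
    have : 0 < n := hn ▸ Fintype.card_pos_iff.2 ⟨v 0⟩
    rw [hsqn, Nat.one_le_ceil_iff]
    positivity
  refine ⟨(Set.toFinite _).image D, ?_, ?_, fun a ha hlong => ?_⟩
  · calc (D '' RP.Vsqrt E v k sqn).ncard ≤ (RP.Vsqrt E v k sqn).ncard :=
          Set.ncard_image_le (Set.toFinite _)
      _ ≤ Nat.card V := Set.ncard_le_card _
      _ = n := by rw [Nat.card_eq_fintype_card, hn]
  · rintro _ ⟨x, hx, rfl⟩
    obtain ⟨_, _, _, _, _, hlen⟩ := hD x hx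
    exact hlen
  · obtain ⟨i, j, Q, Dt, hQ, hdet, hmax⟩ := RP.exists_isDetourAt_max hlong.1 (hDecomp a ha)
    obtain ⟨x, hx, P', Dt', hP', hdet', hsub⟩ :=
      RP.exists_mem_Vsqrt_infix_detour hP ha hsqn1 hD (hDecomp a ha) hlong hQ hdet hmax
    exact ⟨x, hx, P', Dt', hP'.1, hP'.2, hdet', hsub⟩
end
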